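/- Let Ω ⊂ ℝ² be open, x₀ ∈ Ω, d > 0 with the closed ball of radius d around x₀ contained in Ω, and let u, v ∈ C²(Ω) be harmonic in B_d(x₀) \ {x₀}. Then for each i ∈ {1,2} the quantity Q(θ) := −∫_{∂B_θ(x₀)} (∂v/∂ν)(∂u/∂x_i) dσ − ∫_{∂B_θ(x₀)} (∂u/∂ν)(∂v/∂x_i) dσ + ∫_{∂B_θ(x₀)} ⟨∇u, ∇v⟩ ν_i dσ is independent of θ ∈ (0, d]. -/

import Mathlib

open MeasureTheory Real

noncomputable def lap2 (u : EuclideanSpace ℝ (Fin 2) → ℝ) (x : EuclideanSpace ℝ (Fin 2)) : ℝ :=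
  ∑ i : Fin 2, fderiv ℝ (fun y => fderiv ℝ u y (EuclideanSpace.single i 1)) x (EuclideanSpace.single i 1)

noncomputable def unitv (t : ℝ) : EuclideanSpace ℝ (Fin 2) :=
  (WithLp.equiv 2 (Fin 2 → ℝ)).symm ![Real.cos t, Real.sin t]

noncomputable def circpt (x₀ : EuclideanSpace ℝ (Fin 2)) (θ t : ℝ) : EuclideanSpace ℝ (Fin 2) :=
  x₀ + θ • unitv t

/-- The quadratic boundary form Q_i(θ) on the circle ∂B_θ(x₀), written via the
arclength parametrization t ↦ x₀ + θ·(cos t, sin t) (dσ = θ dt, outward unit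
normal ν = (cos t, sin t), with i-th component ν_i = (unitv t) i). -/
noncomputable def Qform (u v : EuclideanSpace ℝ (Fin 2) → ℝ)
    (x₀ : EuclideanSpace ℝ (Fin 2)) (i : Fin 2) (θ : ℝ) : ℝ :=
  -(θ * ∫ t in (0:ℝ)..(2 * π),
      fderiv ℝ v (circpt x₀ θ t) (unitv t) *
        fderiv ℝ u (circpt x₀ θ t) (EuclideanSpace.single i 1))
  - (θ * ∫ t in (0:ℝ)..(2 * π),
      fderiv ℝ u (circpt x₀ θ t) (unitv t) *
        fderiv ℝ v (circpt x₀ θ t) (EuclideanSpace.single i 1))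
  + (θ * ∫ t in (0:ℝ)..(2 * π),
      (inner ℝ (gradient u (circpt x₀ θ t)) (gradient v (circpt x₀ θ t)) : ℝ) * unitv t i)

/-! With `ν = unitv t` and `τ = tangv t`, the integrand of `Qform u v x₀ i θ` is `⟪T_i, ν⟫` for the
field `T_i = ⟪∇u, ∇v⟫ e_i - ∂_i u ∇v - ∂_i v ∇u` (row `i` of the stress tensor of `u` and `v`), so
`Qform` is the flux of `T_i` through the circle of radius `θ`. By the symmetry of second
derivatives, `div T_i = -(∂_i u Δv + ∂_i v Δu)`, which vanishes on the punctured ball.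

For any `C¹` field `F`, differentiating the flux `θ ∫ ⟪F (x₀ + θ ν), ν⟫ dt` under the integral
gives `θ ∫ div F dt`, because `∂_θ (θ ⟪F, ν⟫) = θ div F - ∂_t ⟪F, τ⟫` and the last term integrates
to zero over a period. So the flux of `T_i` has derivative zero on `(0, d)`; since `closedBall x₀ d`
has a slightly larger closed ball inside `Ω`, the flux is also continuous at `d`. -/

open Metric Set
open scoped RealInnerProductSpace Gradient

local notation "ℝ²" => EuclideanSpace ℝ (Fin 2)

lemma exists_gt_closedBall_subset {E : Type*} [NormedAddCommGroup E] [NormedSpace ℝ E]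
    [ProperSpace E] {U : Set E} {x : E} {r : ℝ} (hU : IsOpen U) (hr : 0 ≤ r)
    (h : closedBall x r ⊆ U) : ∃ R, r < R ∧ closedBall x R ⊆ U := by
  obtain ⟨δ, hδ, hsub⟩ := (isCompact_closedBall x r).exists_thickening_subset_open hU h
  refine ⟨r + δ / 2, by linarith, fun y hy => hsub ?_⟩
  rw [thickening_closedBall hδ hr, mem_ball]
  exact (mem_closedBall.1 hy).trans_lt (by linarith)

noncomputable def tangv (t : ℝ) : ℝ² :=
  (WithLp.equiv 2 (Fin 2 → ℝ)).symm ![-Real.sin t, Real.cos t]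

@[simp] lemma unitv_apply_zero (t : ℝ) : unitv t 0 = Real.cos t := rfl
@[simp] lemma unitv_apply_one (t : ℝ) : unitv t 1 = Real.sin t := rfl
@[simp] lemma tangv_apply_zero (t : ℝ) : tangv t 0 = -Real.sin t := rfl
@[simp] lemma tangv_apply_one (t : ℝ) : tangv t 1 = Real.cos t := rfl

lemma unitv_eq (t : ℝ) :
    unitv t = Real.cos t • EuclideanSpace.single 0 1 + Real.sin t • EuclideanSpace.single 1 1 := by
  ext j; fin_cases j <;> simp

lemma tangv_eq (t : ℝ) :
    tangv t =
      (-Real.sin t) • EuclideanSpace.single 0 1 + Real.cos t • EuclideanSpace.single 1 1 := by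
  ext j; fin_cases j <;> simp

lemma hasDerivAt_unitv (t : ℝ) : HasDerivAt unitv (tangv t) t := by
  rw [funext unitv_eq, tangv_eq]
  exact ((hasDerivAt_cos t).smul_const _).add ((hasDerivAt_sin t).smul_const _)

lemma hasDerivAt_tangv (t : ℝ) : HasDerivAt tangv (-unitv t) t := by
  rw [funext tangv_eq, unitv_eq, neg_add, ← neg_smul, ← neg_smul]
  exact ((hasDerivAt_sin t).neg.smul_const _).add ((hasDerivAt_cos t).smul_const _)

lemma continuous_unitv : Continuous unitv :=
  continuous_iff_continuousAt.2 fun t => (hasDerivAt_unitv t).continuousAt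

lemma continuous_tangv : Continuous tangv :=
  continuous_iff_continuousAt.2 fun t => (hasDerivAt_tangv t).continuousAt

lemma norm_unitv (t : ℝ) : ‖unitv t‖ = 1 := by
  simp [EuclideanSpace.norm_eq, Fin.sum_univ_two]

lemma tangv_two_pi : tangv (2 * π) = tangv 0 := by
  ext j; fin_cases j <;> simp

lemma circpt_two_pi (x₀ : ℝ²) (θ : ℝ) : circpt x₀ θ (2 * π) = circpt x₀ θ 0 := by
  ext j; fin_cases j <;> simp [circpt]

lemma dist_circpt (x₀ : ℝ²) (θ t : ℝ) : dist (circpt x₀ θ t) x₀ = |θ| := by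
  simp [circpt, dist_eq_norm, norm_smul, norm_unitv]

lemma hasDerivAt_circpt_radius (x₀ : ℝ²) (θ t : ℝ) :
    HasDerivAt (fun θ => circpt x₀ θ t) (unitv t) θ := by
  simpa [circpt] using ((hasDerivAt_id θ).smul_const (unitv t)).const_add x₀

lemma hasDerivAt_circpt_angle (x₀ : ℝ²) (θ t : ℝ) :
    HasDerivAt (circpt x₀ θ) (θ • tangv t) t :=
  ((hasDerivAt_unitv t).const_smul θ).const_add x₀

lemma continuous_circpt (x₀ : ℝ²) (θ : ℝ) : Continuous (circpt x₀ θ) :=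
  continuous_iff_continuousAt.2 fun t => (hasDerivAt_circpt_angle x₀ θ t).continuousAt

lemma circpt_mem_closedBall {x₀ : ℝ²} {θ R : ℝ} (hθ : |θ| ≤ R) (t : ℝ) :
    circpt x₀ θ t ∈ closedBall x₀ R := by
  rwa [mem_closedBall, dist_circpt]

lemma circpt_mem_ball_diff {x₀ : ℝ²} {θ d : ℝ} (hθ : θ ∈ Ioo 0 d) (t : ℝ) :
    circpt x₀ θ t ∈ ball x₀ d \ {x₀} := by
  rw [mem_sdiff, mem_ball, mem_singleton_iff, ← Ne, ← dist_ne_zero, dist_circpt, abs_of_pos hθ.1]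
  exact ⟨hθ.2, hθ.1.ne'⟩

lemma continuous_fderiv_circpt {G : Type*} [NormedAddCommGroup G] [NormedSpace ℝ G]
    {Ω : Set ℝ²} {f : ℝ² → G} {x₀ : ℝ²} {θ : ℝ} (hΩ : IsOpen Ω) (hf : ContDiffOn ℝ 1 f Ω)
    (hθ : ∀ t, circpt x₀ θ t ∈ Ω) :
    Continuous fun t => fderiv ℝ f (circpt x₀ θ t) :=
  (hf.continuousOn_fderiv_of_isOpen hΩ le_rfl).comp_continuous (continuous_circpt x₀ θ) hθ

lemma inner_unitv_add_inner_tangv (A : ℝ² →L[ℝ] ℝ²) (t : ℝ) :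
    ⟪A (unitv t), unitv t⟫ + ⟪A (tangv t), tangv t⟫ =
      ∑ j : Fin 2, A (EuclideanSpace.single j 1) j := by
  rw [unitv_eq, tangv_eq]
  simp [inner_add_left, inner_add_right, inner_smul_left, inner_smul_right,
    EuclideanSpace.inner_single_right, Fin.sum_univ_two]
  linear_combination
    (A (EuclideanSpace.single 0 1) 0 + A (EuclideanSpace.single 1 1) 1) * sin_sq_add_cos_sq t

noncomputable def divergence (F : ℝ² → ℝ²) (x : ℝ²) : ℝ :=
  ∑ j : Fin 2, fderiv ℝ F x (EuclideanSpace.single j 1) j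

noncomputable def circleFlux (F : ℝ² → ℝ²) (x₀ : ℝ²) (θ : ℝ) : ℝ :=
  θ * ∫ t in 0..2 * π, ⟪F (circpt x₀ θ t), unitv t⟫

section Flux

variable {Ω : Set ℝ²} {F : ℝ² → ℝ²} {x₀ : ℝ²} {θ t : ℝ}

lemma hasDerivAt_inner_unitv_radius (hF : DifferentiableAt ℝ F (circpt x₀ θ t)) :
    HasDerivAt (fun θ => ⟪F (circpt x₀ θ t), unitv t⟫)
      ⟪fderiv ℝ F (circpt x₀ θ t) (unitv t), unitv t⟫ θ := by
  simpa using (hF.hasFDerivAt.comp_hasDerivAt θ (hasDerivAt_circpt_radius x₀ θ t)).inner ℝ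
    (hasDerivAt_const θ (unitv t))

lemma hasDerivAt_inner_tangv_angle (hF : DifferentiableAt ℝ F (circpt x₀ θ t)) :
    HasDerivAt (fun t => ⟪F (circpt x₀ θ t), tangv t⟫)
      (θ * ⟪fderiv ℝ F (circpt x₀ θ t) (tangv t), tangv t⟫ - ⟪F (circpt x₀ θ t), unitv t⟫) t := by
  refine ((hF.hasFDerivAt.comp_hasDerivAt t (hasDerivAt_circpt_angle x₀ θ t)).inner ℝ
    (hasDerivAt_tangv t)).congr_deriv ?_
  simp [inner_smul_left]
  ring

/-- `∂_θ (θ ⟪F, ν⟫) = θ div F - ∂_t ⟪F, τ⟫`: the divergence theorem on an annulus in polar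
coordinates, in differential form. -/
lemma radial_eq_divergence_sub_angular :
    ⟪F (circpt x₀ θ t), unitv t⟫ + θ * ⟪fderiv ℝ F (circpt x₀ θ t) (unitv t), unitv t⟫ =
      θ * divergence F (circpt x₀ θ t) -
        (θ * ⟪fderiv ℝ F (circpt x₀ θ t) (tangv t), tangv t⟫ - ⟪F (circpt x₀ θ t), unitv t⟫) := by
  rw [divergence, ← inner_unitv_add_inner_tangv]
  ring

lemma continuous_angular_deriv (hΩ : IsOpen Ω) (hF : ContDiffOn ℝ 1 F Ω)
    (hθ : ∀ t, circpt x₀ θ t ∈ Ω) : Continuous fun t =>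
      θ * ⟪fderiv ℝ F (circpt x₀ θ t) (tangv t), tangv t⟫ - ⟪F (circpt x₀ θ t), unitv t⟫ :=
  continuous_const.fun_mul (((continuous_fderiv_circpt hΩ hF hθ).clm_apply continuous_tangv).inner
    continuous_tangv) |>.fun_sub
    ((hF.continuousOn.comp_continuous (continuous_circpt x₀ θ) hθ).inner continuous_unitv)

lemma integral_angular_deriv_eq_zero (hΩ : IsOpen Ω) (hF : ContDiffOn ℝ 1 F Ω)
    (hθ : ∀ t, circpt x₀ θ t ∈ Ω) :
    ∫ t in 0..2 * π,
      (θ * ⟪fderiv ℝ F (circpt x₀ θ t) (tangv t), tangv t⟫ - ⟪F (circpt x₀ θ t), unitv t⟫) = 0 := by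
  rw [intervalIntegral.integral_eq_sub_of_hasDerivAt (fun t _ => hasDerivAt_inner_tangv_angle
      ((hF.contDiffAt (hΩ.mem_nhds (hθ t))).differentiableAt one_ne_zero))
    (continuous_angular_deriv hΩ hF hθ |>.intervalIntegrable _ _),
    circpt_two_pi, tangv_two_pi, sub_self]

lemma hasDerivAt_integral_inner_unitv (hΩ : IsOpen Ω) (hF : ContDiffOn ℝ 1 F Ω) {R : ℝ}
    (hR : closedBall x₀ R ⊆ Ω) (hθ : |θ| < R) :
    HasDerivAt (fun θ => ∫ t in 0..2 * π, ⟪F (circpt x₀ θ t), unitv t⟫)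
      (∫ t in 0..2 * π, ⟪fderiv ℝ F (circpt x₀ θ t) (unitv t), unitv t⟫) θ := by
  have hmem : ∀ θ' ∈ Ioo (-R) R, ∀ t, circpt x₀ θ' t ∈ Ω := fun θ' h t =>
    hR (circpt_mem_closedBall (abs_lt.2 h).le t)
  have hθR : θ ∈ Ioo (-R) R := abs_lt.1 hθ
  have hFc : ∀ θ' ∈ Ioo (-R) R, Continuous fun t => ⟪F (circpt x₀ θ' t), unitv t⟫ := fun θ' h =>
    (hF.continuousOn.comp_continuous (continuous_circpt x₀ θ') (hmem θ' h)).inner continuous_unitv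
  obtain ⟨C, hC⟩ := (isCompact_closedBall x₀ R).exists_bound_of_continuousOn
    ((hF.continuousOn_fderiv_of_isOpen hΩ le_rfl).mono hR)
  refine (intervalIntegral.hasDerivAt_integral_of_dominated_loc_of_deriv_le (μ := volume)
    (F' := fun θ t => ⟪fderiv ℝ F (circpt x₀ θ t) (unitv t), unitv t⟫) (bound := fun _ => C)
    (isOpen_Ioo.mem_nhds hθR) ?_ ((hFc θ hθR).intervalIntegrable _ _) ?_ ?_
    intervalIntegrable_const ?_).2
  · filter_upwards [isOpen_Ioo.mem_nhds hθR] with θ' h using (hFc θ' h).aestronglyMeasurable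
  · exact ((continuous_fderiv_circpt hΩ hF (hmem θ hθR)).clm_apply continuous_unitv).inner
      continuous_unitv |>.aestronglyMeasurable
  · refine ae_of_all _ fun t _ θ' h => ?_
    calc ‖⟪fderiv ℝ F (circpt x₀ θ' t) (unitv t), unitv t⟫‖
        ≤ ‖fderiv ℝ F (circpt x₀ θ' t)‖ * ‖unitv t‖ * ‖unitv t‖ :=
          (norm_inner_le_norm _ _).trans
            (mul_le_mul_of_nonneg_right (ContinuousLinearMap.le_opNorm _ _) (norm_nonneg _))
      _ ≤ C := by
          rw [norm_unitv, mul_one, mul_one]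
          exact hC _ (circpt_mem_closedBall (abs_lt.2 h).le t)
  · exact ae_of_all _ fun t _ θ' h => hasDerivAt_inner_unitv_radius
      ((hF.contDiffAt (hΩ.mem_nhds (hmem θ' h t))).differentiableAt one_ne_zero)

lemma integral_radial_deriv_eq (hΩ : IsOpen Ω) (hF : ContDiffOn ℝ 1 F Ω)
    (hθ : ∀ t, circpt x₀ θ t ∈ Ω) :
    (∫ t in 0..2 * π, ⟪F (circpt x₀ θ t), unitv t⟫) +
        θ * ∫ t in 0..2 * π, ⟪fderiv ℝ F (circpt x₀ θ t) (unitv t), unitv t⟫ =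
      θ * ∫ t in 0..2 * π, divergence F (circpt x₀ θ t) := by
  have hFc : Continuous fun t => F (circpt x₀ θ t) :=
    hF.continuousOn.comp_continuous (continuous_circpt x₀ θ) hθ
  have hDF := continuous_fderiv_circpt hΩ hF hθ
  have hdiv : Continuous fun t => θ * divergence F (circpt x₀ θ t) := by
    have := fun j : Fin 2 => hDF.clm_apply (continuous_const (y := EuclideanSpace.single j 1))
    unfold divergence
    fun_prop
  rw [← intervalIntegral.integral_const_mul, ← intervalIntegral.integral_const_mul,
    ← intervalIntegral.integral_add ((hFc.inner continuous_unitv).intervalIntegrable _ _)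
      ((continuous_const.fun_mul ((hDF.clm_apply continuous_unitv).inner
        continuous_unitv)).intervalIntegrable _ _)]
  simp only [radial_eq_divergence_sub_angular]
  rw [intervalIntegral.integral_sub (hdiv.intervalIntegrable _ _)
    (continuous_angular_deriv hΩ hF hθ |>.intervalIntegrable _ _),
    integral_angular_deriv_eq_zero hΩ hF hθ, sub_zero]

theorem hasDerivAt_circleFlux (hΩ : IsOpen Ω) (hF : ContDiffOn ℝ 1 F Ω) {R : ℝ}
    (hR : closedBall x₀ R ⊆ Ω) (hθ : |θ| < R) :
    HasDerivAt (circleFlux F x₀) (θ * ∫ t in 0..2 * π, divergence F (circpt x₀ θ t)) θ := by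
  refine ((hasDerivAt_id θ).mul (hasDerivAt_integral_inner_unitv hΩ hF hR hθ)).congr_deriv ?_
  rw [id, one_mul, integral_radial_deriv_eq hΩ hF fun t => hR (circpt_mem_closedBall hθ.le t)]

theorem circleFlux_eq_of_divergence_eq_zero (hΩ : IsOpen Ω) (hF : ContDiffOn ℝ 1 F Ω) {d : ℝ}
    (hball : closedBall x₀ d ⊆ Ω) (hdiv : ∀ x ∈ ball x₀ d \ {x₀}, divergence F x = 0)
    {θ₁ θ₂ : ℝ} (h₁ : θ₁ ∈ Ioc 0 d) (h₂ : θ₂ ∈ Ioc 0 d) :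
    circleFlux F x₀ θ₁ = circleFlux F x₀ θ₂ := by
  wlog h : θ₁ ≤ θ₂ generalizing θ₁ θ₂
  · exact (this h₂ h₁ (le_of_not_ge h)).symm
  obtain ⟨R, hdR, hR⟩ := exists_gt_closedBall_subset hΩ (h₁.1.le.trans h₁.2) hball
  have hderiv : ∀ θ ∈ Icc θ₁ θ₂, HasDerivAt (circleFlux F x₀)
      (θ * ∫ t in 0..2 * π, divergence F (circpt x₀ θ t)) θ := fun θ hθ =>
    hasDerivAt_circleFlux hΩ hF hR (by rw [abs_of_pos (h₁.1.trans_le hθ.1)]; linarith [hθ.2, h₂.2])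
  have hzero : ∀ θ ∈ Ico θ₁ θ₂, ∫ t in 0..2 * π, divergence F (circpt x₀ θ t) = 0 :=
    fun θ hθ => by
      simp [hdiv _ (circpt_mem_ball_diff ⟨h₁.1.trans_le hθ.1, hθ.2.trans_le h₂.2⟩ _)]
  refine (constant_of_has_deriv_right_zero
    (fun θ hθ => (hderiv θ hθ).continuousAt.continuousWithinAt) (fun θ hθ => ?_) θ₂
    ⟨h, le_rfl⟩).symm
  simpa [hzero θ hθ] using (hderiv θ (Ico_subset_Icc_self hθ)).hasDerivWithinAt

end Flux

noncomputable def partialDeriv (k : Fin 2) (u : ℝ² → ℝ) (x : ℝ²) : ℝ :=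
  fderiv ℝ u x (EuclideanSpace.single k 1)

section Stress

variable {Ω : Set ℝ²} {u v f g : ℝ² → ℝ} {x : ℝ²}

lemma lap2_eq_sum_partialDeriv (u : ℝ² → ℝ) (x : ℝ²) :
    lap2 u x = ∑ k : Fin 2, partialDeriv k (partialDeriv k u) x := rfl

lemma gradient_apply (u : ℝ² → ℝ) (x : ℝ²) (k : Fin 2) : ∇ u x k = partialDeriv k u x := by
  simp [partialDeriv, ← inner_gradient_left, EuclideanSpace.inner_single_right]

lemma partialDeriv_mul (hf : DifferentiableAt ℝ f x) (hg : DifferentiableAt ℝ g x) (k : Fin 2) :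
    partialDeriv k (fun y => f y * g y) x =
      f x * partialDeriv k g x + g x * partialDeriv k f x := by
  simp [partialDeriv, fderiv_fun_mul hf hg]

lemma partialDeriv_sub (hf : DifferentiableAt ℝ f x) (hg : DifferentiableAt ℝ g x) (k : Fin 2) :
    partialDeriv k (fun y => f y - g y) x = partialDeriv k f x - partialDeriv k g x := by
  simp [partialDeriv, fderiv_fun_sub hf hg]

lemma partialDeriv_neg (k : Fin 2) :
    partialDeriv k (fun y => -f y) x = -partialDeriv k f x := by
  simp [partialDeriv]

lemma ContDiffAt.partialDeriv (hu : ContDiffAt ℝ 2 u x) (k : Fin 2) :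
    ContDiffAt ℝ 1 (partialDeriv k u) x :=
  (hu.fderiv_right le_rfl).clm_apply contDiffAt_const

lemma partialDeriv_partialDeriv (hu : DifferentiableAt ℝ (fderiv ℝ u) x) (j k : Fin 2) :
    partialDeriv j (partialDeriv k u) x =
      fderiv ℝ (fderiv ℝ u) x (EuclideanSpace.single j 1) (EuclideanSpace.single k 1) := by
  unfold partialDeriv
  simp [fderiv_clm_apply hu (differentiableAt_const _)]

lemma partialDeriv_comm (hu : ContDiffAt ℝ 2 u x) (j k : Fin 2) :
    partialDeriv j (partialDeriv k u) x = partialDeriv k (partialDeriv j u) x := by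
  have hD : DifferentiableAt ℝ (fderiv ℝ u) x :=
    (hu.fderiv_right (m := 1) le_rfl).differentiableAt one_ne_zero
  rw [partialDeriv_partialDeriv hD, partialDeriv_partialDeriv hD]
  exact hu.isSymmSndFDerivAt (by simp [minSmoothness_of_isRCLikeNormedField])
    (EuclideanSpace.single j 1) (EuclideanSpace.single k 1)

lemma inner_gradient_eq_sum (u v : ℝ² → ℝ) (x : ℝ²) :
    ⟪∇ u x, ∇ v x⟫ = ∑ k : Fin 2, partialDeriv k u x * partialDeriv k v x := by
  simp only [PiLp.inner_apply, gradient_apply, RCLike.inner_apply, conj_trivial, mul_comm]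

noncomputable def stressField (u v : ℝ² → ℝ) (i : Fin 2) (x : ℝ²) : ℝ² :=
  ⟪∇ u x, ∇ v x⟫ • EuclideanSpace.single i 1 - partialDeriv i u x • ∇ v x
    - partialDeriv i v x • ∇ u x

lemma stressField_apply (u v : ℝ² → ℝ) (i : Fin 2) (x : ℝ²) (j : Fin 2) :
    stressField u v i x j =
      (if j = i then ∑ k : Fin 2, partialDeriv k u x * partialDeriv k v x else 0)
        - partialDeriv i u x * partialDeriv j v x - partialDeriv i v x * partialDeriv j u x := by
  rw [stressField, inner_gradient_eq_sum]
  simp [gradient_apply, PiLp.single_apply]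

lemma inner_stressField (u v : ℝ² → ℝ) (i : Fin 2) (x w : ℝ²) :
    ⟪stressField u v i x, w⟫ = -(fderiv ℝ v x w * partialDeriv i u x)
      - fderiv ℝ u x w * partialDeriv i v x + ⟪∇ u x, ∇ v x⟫ * w i := by
  simp [stressField, inner_sub_left, inner_smul_left, inner_gradient_left,
    EuclideanSpace.inner_single_left]
  ring

lemma ContDiffAt.stressField (hu : ContDiffAt ℝ 2 u x) (hv : ContDiffAt ℝ 2 v x) (i : Fin 2) :
    ContDiffAt ℝ 1 (stressField u v i) x := by
  have hu' := hu.partialDeriv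
  have hv' := hv.partialDeriv
  refine contDiffAt_euclidean.2 fun j => ?_
  simp only [stressField_apply]
  split_ifs <;> fun_prop

lemma ContDiffOn.stressField (hΩ : IsOpen Ω) (hu : ContDiffOn ℝ 2 u Ω)
    (hv : ContDiffOn ℝ 2 v Ω) (i : Fin 2) : ContDiffOn ℝ 1 (stressField u v i) Ω := fun _ hx =>
  ((hu.contDiffAt (hΩ.mem_nhds hx)).stressField (hv.contDiffAt (hΩ.mem_nhds hx)) i).contDiffWithinAt

lemma divergence_eq_sum_partialDeriv {F : ℝ² → ℝ²} (hF : DifferentiableAt ℝ F x) :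
    divergence F x = ∑ j : Fin 2, partialDeriv j (fun y => F y j) x := by
  refine Finset.sum_congr rfl fun j _ => ?_
  have h : HasFDerivAt (fun y => F y j) (PiLp.proj 2 (fun _ => ℝ) j ∘L fderiv ℝ F x) x :=
    (PiLp.hasFDerivAt_apply (𝕜 := ℝ) 2 (F x) j).comp (g := fun f : ℝ² => f j) x hF.hasFDerivAt
  rw [partialDeriv, h.fderiv]
  rfl

lemma divergence_stressField (hu : ContDiffAt ℝ 2 u x) (hv : ContDiffAt ℝ 2 v x) (i : Fin 2) :
    divergence (stressField u v i) x =
      -(partialDeriv i u x * lap2 v x + partialDeriv i v x * lap2 u x) := by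
  rw [divergence_eq_sum_partialDeriv ((hu.stressField hv i).differentiableAt one_ne_zero)]
  simp only [stressField_apply]
  have hu0 := (hu.partialDeriv 0).differentiableAt one_ne_zero
  have hu1 := (hu.partialDeriv 1).differentiableAt one_ne_zero
  have hv0 := (hv.partialDeriv 0).differentiableAt one_ne_zero
  have hv1 := (hv.partialDeriv 1).differentiableAt one_ne_zero
  fin_cases i <;> simp (disch := fun_prop) [Fin.sum_univ_two, partialDeriv_mul, partialDeriv_sub,
    partialDeriv_neg, lap2_eq_sum_partialDeriv, partialDeriv_comm hu 0 1,
    partialDeriv_comm hv 0 1] <;> ring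

end Stress

lemma Qform_eq_circleFlux {Ω : Set ℝ²} {u v : ℝ² → ℝ} {x₀ : ℝ²} {θ : ℝ} (hΩ : IsOpen Ω)
    (hu : ContDiffOn ℝ 1 u Ω) (hv : ContDiffOn ℝ 1 v Ω) (hθ : ∀ t, circpt x₀ θ t ∈ Ω)
    (i : Fin 2) : Qform u v x₀ i θ = circleFlux (stressField u v i) x₀ θ := by
  have hD : ∀ w : ℝ² → ℝ, ContDiffOn ℝ 1 w Ω → Continuous fun t => fderiv ℝ w (circpt x₀ θ t) :=
    fun w hw => continuous_fderiv_circpt hΩ hw hθ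
  have hgrad : ∀ w : ℝ² → ℝ, ContDiffOn ℝ 1 w Ω → Continuous fun t => ∇ w (circpt x₀ θ t) :=
    fun w hw => (InnerProductSpace.toDual ℝ ℝ²).symm.continuous.comp (hD w hw)
  have hA : Continuous fun t => fderiv ℝ v (circpt x₀ θ t) (unitv t) *
      fderiv ℝ u (circpt x₀ θ t) (EuclideanSpace.single i 1) :=
    ((hD v hv).clm_apply continuous_unitv).fun_mul ((hD u hu).clm_apply continuous_const)
  have hB : Continuous fun t => fderiv ℝ u (circpt x₀ θ t) (unitv t) *
      fderiv ℝ v (circpt x₀ θ t) (EuclideanSpace.single i 1) :=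
    ((hD u hu).clm_apply continuous_unitv).fun_mul ((hD v hv).clm_apply continuous_const)
  have hC : Continuous fun t => ⟪∇ u (circpt x₀ θ t), ∇ v (circpt x₀ θ t)⟫ * unitv t i :=
    ((hgrad u hu).inner (hgrad v hv)).fun_mul (by fun_prop)
  simp only [Qform, circleFlux, inner_stressField, partialDeriv]
  rw [intervalIntegral.integral_add ((hA.fun_neg.fun_sub hB).intervalIntegrable _ _)
      (hC.intervalIntegrable _ _),
    intervalIntegral.integral_sub (hA.fun_neg.intervalIntegrable _ _) (hB.intervalIntegrable _ _),
    intervalIntegral.integral_neg]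
  ring

theorem Qform_indep_of_radius_general (Ω : Set (EuclideanSpace ℝ (Fin 2))) (hΩ : IsOpen Ω)
    (x₀ : EuclideanSpace ℝ (Fin 2)) (d : ℝ)
    (hball : Metric.closedBall x₀ d ⊆ Ω)
    (u v : EuclideanSpace ℝ (Fin 2) → ℝ)
    (hu : ContDiffOn ℝ 2 u Ω) (hv : ContDiffOn ℝ 2 v Ω)
    (huh : ∀ x ∈ Metric.ball x₀ d \ {x₀}, lap2 u x = 0)
    (hvh : ∀ x ∈ Metric.ball x₀ d \ {x₀}, lap2 v x = 0) (i : Fin 2) :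
    ∀ θ₁ ∈ Set.Ioc 0 d, ∀ θ₂ ∈ Set.Ioc 0 d,
      Qform u v x₀ i θ₁ = Qform u v x₀ i θ₂ := by
  have hdiv : ∀ x ∈ ball x₀ d \ {x₀}, divergence (stressField u v i) x = 0 := fun x hx => by
    have hxΩ := hΩ.mem_nhds (hball (ball_subset_closedBall hx.1))
    rw [divergence_stressField (hu.contDiffAt hxΩ) (hv.contDiffAt hxΩ), huh x hx, hvh x hx]
    ring
  have hcircle : ∀ θ ∈ Ioc 0 d, ∀ t, circpt x₀ θ t ∈ Ω := fun θ hθ t =>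
    hball (circpt_mem_closedBall ((abs_of_pos hθ.1).trans_le hθ.2) t)
  intro θ₁ h₁ θ₂ h₂
  rw [Qform_eq_circleFlux hΩ (hu.of_le one_le_two) (hv.of_le one_le_two) (hcircle θ₁ h₁),
    Qform_eq_circleFlux hΩ (hu.of_le one_le_two) (hv.of_le one_le_two) (hcircle θ₂ h₂)]
  exact circleFlux_eq_of_divergence_eq_zero hΩ (hu.stressField hΩ hv i) hball hdiv h₁ h₂

theorem Qform_indep_of_radius (Ω : Set (EuclideanSpace ℝ (Fin 2))) (hΩ : IsOpen Ω)
    (x₀ : EuclideanSpace ℝ (Fin 2)) (hx₀ : x₀ ∈ Ω) (d : ℝ) (hd : 0 < d)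
    (hball : Metric.closedBall x₀ d ⊆ Ω)
    (u v : EuclideanSpace ℝ (Fin 2) → ℝ)
    (hu : ContDiffOn ℝ 2 u Ω) (hv : ContDiffOn ℝ 2 v Ω)
    (huh : ∀ x ∈ Metric.ball x₀ d \ {x₀}, lap2 u x = 0)
    (hvh : ∀ x ∈ Metric.ball x₀ d \ {x₀}, lap2 v x = 0) (i : Fin 2) :
    ∀ θ₁ ∈ Set.Ioc 0 d, ∀ θ₂ ∈ Set.Ioc 0 d,
      Qform u v x₀ i θ₁ = Qform u v x₀ i θ₂ :=
  Qform_indep_of_radius_general Ω hΩ x₀ d hball u v hu hv huh hvh i
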